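/- arXiv:1010.5362 — 2 statements merged into one kernel-verified Lean document; each statement's English description precedes it below -/
import Mathlib

section
/- Let ξ be a nowhere-vanishing vector field on ℝ² spanning a distribution H, let f : ℝ² → ℝ be a C² function with L_ξ f > 0 everywhere, and let F : ℝ → ℝ² be F(t) = (t, t²). Then F∘f = (f, f²) is an H-free map: the vectors (L_ξ f, L_ξ(f²)) and (L_ξ L_ξ f, L_ξ L_ξ (f²)) in ℝ² are linearly independent at every point. -/
/-- If ξ is a nowhere-vanishing (differentiable) vector field on ℝ² and f is C²
with L_ξ f > 0 everywhere, then (f, f²) is an H-free map for H = span ξ: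
the vectors (L_ξ f, L_ξ(f²)) and (L_ξL_ξ f, L_ξL_ξ(f²)) are linearly independent
at every point. -/
theorem stmt_5 (ξ : ℝ × ℝ → ℝ × ℝ) (f : ℝ × ℝ → ℝ)
    (hξ : ContDiff ℝ 1 ξ) (hξ0 : ∀ p, ξ p ≠ 0)
    (hf : ContDiff ℝ 2 f)
    (hLf : ∀ p, 0 < fderiv ℝ f p (ξ p)) :
    ∀ p : ℝ × ℝ,
      LinearIndependent ℝ
        ![(fderiv ℝ f p (ξ p),
           fderiv ℝ (fun q => (f q) ^ 2) p (ξ p)),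
          (fderiv ℝ (fun q => fderiv ℝ f q (ξ q)) p (ξ p),
           fderiv ℝ (fun q => fderiv ℝ (fun r => (f r) ^ 2) q (ξ q)) p (ξ p))] := by
  intro p
  have hdiff : ∀ q, DifferentiableAt ℝ f q := fun q =>
    (hf.differentiable two_ne_zero).differentiableAt
  have hdf : ContDiff ℝ 1 (fderiv ℝ f) := hf.fderiv_right (by norm_num)
  have hh1 : ContDiff ℝ 1 (fun q => fderiv ℝ f q (ξ q)) := hdf.clm_apply hξ
  set h : ℝ × ℝ → ℝ := fun q => fderiv ℝ f q (ξ q) with hh_def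
  set a : ℝ := fderiv ℝ f p (ξ p) with ha_def
  set b : ℝ := fderiv ℝ h p (ξ p) with hb_def
  have ha : 0 < a := hLf p
  -- first coordinates of each Lie derivative of f²
  have key : (fun q => fderiv ℝ (fun r => (f r) ^ 2) q (ξ q))
      = fun q => 2 * f q * h q := by
    funext q
    have H2 : HasFDerivAt (fun r => (f r) ^ 2)
        (f q • fderiv ℝ f q + f q • fderiv ℝ f q) q := by
      rw [show (fun r => (f r) ^ 2) = fun r => f r * f r from funext fun r => pow_two _]
      exact (hdiff q).hasFDerivAt.mul (hdiff q).hasFDerivAt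
    rw [H2.fderiv]
    simp [hh_def]
    ring
  have hsq : fderiv ℝ (fun q => (f q) ^ 2) p (ξ p) = 2 * f p * a := by
    have := congrFun key p
    simpa [hh_def, ha_def] using this
  -- second Lie derivative of f²
  have hbF : HasFDerivAt h (fderiv ℝ h p) p :=
    (hh1.differentiable one_ne_zero p).hasFDerivAt
  have h2f : HasFDerivAt (fun q => 2 * f q) ((2 : ℝ) • fderiv ℝ f p) p :=
    (hdiff p).hasFDerivAt.const_mul 2
  have hprod : HasFDerivAt (fun q => 2 * f q * h q)
      ((2 * f p) • fderiv ℝ h p + h p • ((2 : ℝ) • fderiv ℝ f p)) p :=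
    h2f.mul hbF
  have hsq2 : fderiv ℝ (fun q => fderiv ℝ (fun r => (f r) ^ 2) q (ξ q)) p (ξ p)
      = 2 * f p * b + 2 * a * a := by
    rw [key, hprod.fderiv]
    simp [hb_def, ha_def, hh_def]
    ring
  rw [hsq, hsq2, linearIndependent_fin2]
  constructor
  · intro hzero
    simp only [Matrix.cons_val_one, Matrix.head_cons, Matrix.cons_val_zero, Prod.mk_eq_zero] at hzero
    obtain ⟨h1, h2⟩ := hzero
    rw [h1] at h2
    nlinarith [ha, h2]
  · intro c hc
    simp only [Matrix.cons_val_one, Matrix.head_cons, Matrix.cons_val_zero,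
      Prod.smul_mk, smul_eq_mul, Prod.mk.injEq] at hc
    obtain ⟨h1, h2⟩ := hc
    have e : 2 * f p * (c * b) = 2 * f p * a := by rw [h1]
    have e2 : c * (a * a) = 0 := by nlinarith [h2, e]
    rcases mul_eq_zero.1 e2 with hc0 | ha0
    · rw [hc0, zero_mul] at h1; exact absurd h1.symm (ne_of_gt ha)
    · nlinarith [ha, ha0]
end

section
/- Let ξ be a nowhere-vanishing vector field on ℝ² and f : ℝ² → ℝ a smooth function with L_ξ f nowhere zero. For any smooth free map F : ℝ → ℝ² (i.e., with F'(s) and F''(s) linearly independent for all s), the composition F ∘ f is H-free for H = span ξ: the determinant of the 2×2 matrix with rows (L_ξ(F¹∘f), L_ξ(F²∘f)) and (L²_ξ(F¹∘f), L²_ξ(F²∘f)) equals (L_ξ f)³ · det(F'(f), F''(f)) ≠ 0 at every point. -/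
/-- Composition theorem in the 1-dimensional case: if ξ is a nowhere-vanishing
smooth vector field on ℝ², f smooth with L_ξ f nowhere zero, and F = (F₁,F₂) :
ℝ → ℝ² a smooth free map (F' and F'' linearly independent everywhere), then
det D₂(F∘f) = (L_ξ f)³ · det(F'(f), F''(f)) ≠ 0, so F∘f is H-free for
H = span ξ. -/
theorem stmt_19 (ξ : ℝ × ℝ → ℝ × ℝ) (f : ℝ × ℝ → ℝ) (F₁ F₂ : ℝ → ℝ)
    (hξ : ContDiff ℝ (⊤ : ℕ∞) ξ) (hf : ContDiff ℝ (⊤ : ℕ∞) f)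
    (hF₁ : ContDiff ℝ (⊤ : ℕ∞) F₁) (hF₂ : ContDiff ℝ (⊤ : ℕ∞) F₂)
    (hξ0 : ∀ p, ξ p ≠ 0)
    (hLf : ∀ p, fderiv ℝ f p (ξ p) ≠ 0)
    (hfree : ∀ s : ℝ,
      LinearIndependent ℝ ![(deriv F₁ s, deriv F₂ s),
                            (deriv (deriv F₁) s, deriv (deriv F₂) s)]) :
    ∀ p : ℝ × ℝ,
      fderiv ℝ (fun q => F₁ (f q)) p (ξ p) *
          fderiv ℝ (fun q => fderiv ℝ (fun r => F₂ (f r)) q (ξ q)) p (ξ p) -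
        fderiv ℝ (fun q => F₂ (f q)) p (ξ p) *
          fderiv ℝ (fun q => fderiv ℝ (fun r => F₁ (f r)) q (ξ q)) p (ξ p)
      = (fderiv ℝ f p (ξ p)) ^ 3 *
          (deriv F₁ (f p) * deriv (deriv F₂) (f p) -
           deriv F₂ (f p) * deriv (deriv F₁) (f p)) ∧
      (fderiv ℝ f p (ξ p)) ^ 3 *
          (deriv F₁ (f p) * deriv (deriv F₂) (f p) -
           deriv F₂ (f p) * deriv (deriv F₁) (f p)) ≠ 0 := by
  intro p
  have hfd : Differentiable ℝ f := hf.differentiable (by simp)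
  have hL : ContDiff ℝ (⊤ : ℕ∞) (fun q => fderiv ℝ f q (ξ q)) :=
    (hf.fderiv_right (by simp)).clm_apply hξ
  have hLd : Differentiable ℝ (fun q => fderiv ℝ f q (ξ q)) := hL.differentiable (by simp)
  -- chain rule
  have chain : ∀ (F : ℝ → ℝ), Differentiable ℝ F → ∀ q,
      fderiv ℝ (fun r => F (f r)) q (ξ q) = deriv F (f q) * fderiv ℝ f q (ξ q) := by
    intro F hF q
    have h := fderiv_comp q (hF (f q)) (hfd q)
    have h2 : fderiv ℝ (fun r => F (f r)) q (ξ q)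
        = fderiv ℝ F (f q) (fderiv ℝ f q (ξ q)) := by
      rw [show (fun r => F (f r)) = F ∘ f from rfl, h]; rfl
    rw [h2]
    have h3 : fderiv ℝ f q (ξ q) = (fderiv ℝ f q (ξ q)) • (1 : ℝ) := by simp
    rw [h3, map_smul, fderiv_apply_one_eq_deriv, smul_eq_mul, smul_eq_mul, mul_one, mul_comm]
  -- second-order formula
  have h2nd : ∀ (F : ℝ → ℝ), ContDiff ℝ (⊤ : ℕ∞) F →
      fderiv ℝ (fun q => fderiv ℝ (fun r => F (f r)) q (ξ q)) p (ξ p)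
        = deriv (deriv F) (f p) * fderiv ℝ f p (ξ p) * fderiv ℝ f p (ξ p)
          + deriv F (f p) * fderiv ℝ (fun q => fderiv ℝ f q (ξ q)) p (ξ p) := by
    intro F hF
    have hF' := (contDiff_infty_iff_deriv.mp (hF.of_le (by simp))).2
    have heq : (fun q => fderiv ℝ (fun r => F (f r)) q (ξ q))
        = fun q => deriv F (f q) * fderiv ℝ f q (ξ q) := funext (chain F (hF.differentiable (by simp)))
    rw [heq]
    have hc : DifferentiableAt ℝ (fun q => deriv F (f q)) p :=
      ((hF'.differentiable (by simp) (f p)).comp p (hfd p))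
    rw [fderiv_fun_mul hc (hLd p)]
    have := chain (deriv F) (hF'.differentiable (by simp)) p
    simp only [ContinuousLinearMap.add_apply, ContinuousLinearMap.coe_smul',
      Pi.smul_apply, smul_eq_mul]
    rw [this]
    ring
  refine ⟨?_, ?_⟩
  · rw [h2nd F₁ hF₁, h2nd F₂ hF₂, chain F₁ (hF₁.differentiable (by simp)) p, chain F₂ (hF₂.differentiable (by simp)) p]
    ring
  · have hdet : deriv F₁ (f p) * deriv (deriv F₂) (f p)
        - deriv F₂ (f p) * deriv (deriv F₁) (f p) ≠ 0 := by
      set a := deriv F₁ (f p); set b := deriv F₂ (f p)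
      set c := deriv (deriv F₁) (f p); set d := deriv (deriv F₂) (f p)
      intro h0
      have hli := LinearIndependent.pair_iff.mp (hfree (f p))
      have h1 := hli d (-b) (by
        show d • (a, b) + (-b) • (c, d) = 0
        have : d * a + -b * c = 0 := by linarith
        simp [Prod.ext_iff, Prod.smul_mk, smul_eq_mul]; constructor <;> linarith)
      have h2 := hli c (-a) (by
        show c • (a, b) + (-a) • (c, d) = 0
        simp [Prod.ext_iff, Prod.smul_mk, smul_eq_mul]; constructor <;> linarith)
      have ha : a = 0 := by linarith [h2.2]
      have hb : b = 0 := by linarith [h1.2]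
      have h3 := hli 1 0 (by simp [Prod.ext_iff]; exact ⟨ha, hb⟩)
      exact one_ne_zero h3.1
    exact mul_ne_zero (pow_ne_zero 3 (hLf p)) hdet
end
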